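/- For the partition function factorization: with the spin decomposition of the 2D polymer into two independent 1D Ising systems, the polymer partition function satisfies ℤ_N^β(h) = Z_{Λ_N}^{β/2}(h₁) · Z_{Λ_N}^{β/2}(h₂), where ℤ_N^β(h) = ∑_{S∈𝕎_N} exp(-βℍ_N(S)), Z_{Λ_N}^{β}(k) = ∑_{σ∈{-1,1}^N} exp(-βH_{Λ_N}(σ)) with field k, h₁ = ⟨h,e₁-e₂⟩, h₂ = ⟨h,e₁+e₂⟩. -/

import Mathlib

open Finset Real

noncomputable section

/-- The spin value `±1` associated to a Boolean. -/
def spin (b : Bool) : ℝ := if b then 1 else -1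

/-- The set of ordered pairs `i < j` of sites in `Λ_N = {1, …, N}`. -/
def pairs (N : ℕ) : Finset (Fin N × Fin N) :=
  Finset.univ.filter (fun p => p.1 < p.2)

/-- Ising Hamiltonian on `Λ_N` with free boundary conditions, coupling matrix
`J` and external field `k`: `H(σ) = -∑_{i<j} J_{ij} σ_i σ_j - k ∑_i σ_i`. -/
def isingH (N : ℕ) (J : Fin N → Fin N → ℝ) (k : ℝ) (σ : Fin N → Bool) : ℝ :=
  -(∑ p ∈ pairs N, J p.1 p.2 * spin (σ p.1) * spin (σ p.2)) -
    k * ∑ i, spin (σ i)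

/-- Ising partition function at inverse temperature `β`. -/
def isingZ (N : ℕ) (J : Fin N → Fin N → ℝ) (β k : ℝ) : ℝ :=
  ∑ σ : Fin N → Bool, exp (-β * isingH N J k σ)

/-- Ising Gibbs probability of a configuration `σ`. -/
def isingP (N : ℕ) (J : Fin N → Fin N → ℝ) (β k : ℝ) (σ : Fin N → Bool) : ℝ :=
  exp (-β * isingH N J k σ) / isingZ N J β k

/-- Two-point function `⟨σ_i σ_j⟩` of the Ising Gibbs measure. -/
def isingCorr (N : ℕ) (J : Fin N → Fin N → ℝ) (β k : ℝ) (i j : Fin N) : ℝ :=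
  ∑ σ : Fin N → Bool, spin (σ i) * spin (σ j) * isingP N J β k σ

/-- Magnetization `⟨σ_i⟩` of the Ising Gibbs measure. -/
def isingMag (N : ℕ) (J : Fin N → Fin N → ℝ) (β k : ℝ) (i : Fin N) : ℝ :=
  ∑ σ : Fin N → Bool, spin (σ i) * isingP N J β k σ

/-- The unit step of `ℤ²` associated (via the rotated-frame spin decomposition)
to a pair of spins. Each of the four spin pairs corresponds to one of the four
unit steps `±e₁, ±e₂`. -/
def stepOf : Bool × Bool → ℤ × ℤ
  | (true, true) => (-1, 0)
  | (true, false) => (0, 1)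
  | (false, true) => (0, -1)
  | (false, false) => (1, 0)

/-- Polymer Hamiltonian on `N`-step walks with increments `X`:
`ℍ_N(S) = -∑_{1≤i<j≤N} V_{ij} ⟨X_i, X_j⟩ + ⟨h, S_N⟩`, where `S_N = ∑_i X_i`. -/
def polyH (N : ℕ) (V : Fin N → Fin N → ℝ) (h : ℝ × ℝ) (X : Fin N → ℤ × ℤ) : ℝ :=
  -(∑ p ∈ pairs N, V p.1 p.2 *
      (((X p.1).1 * (X p.2).1 + (X p.1).2 * (X p.2).2 : ℤ) : ℝ)) +
    (h.1 * ((∑ i, (X i).1 : ℤ) : ℝ) + h.2 * ((∑ i, (X i).2 : ℤ) : ℝ))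

/-- Polymer partition function `ℤ_N^β(h)`; walks in `𝕎_N` are enumerated by
their spin pairs via the bijection `X_i ↔ (σ_i, σ̃_i)`. -/
def polyZ (N : ℕ) (V : Fin N → Fin N → ℝ) (β : ℝ) (h : ℝ × ℝ) : ℝ :=
  ∑ c : Fin N → Bool × Bool, exp (-β * polyH N V h (fun i => stepOf (c i)))

/-- The polymer Gibbs probability `ℙ_N^{β,h}` of a walk (encoded by spins). -/
def polyP (N : ℕ) (V : Fin N → Fin N → ℝ) (β : ℝ) (h : ℝ × ℝ)
    (c : Fin N → Bool × Bool) : ℝ :=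
  exp (-β * polyH N V h (fun i => stepOf (c i))) / polyZ N V β h

/-! In the rotated frame a step is `X = -(σ + σ̃)/2 • e₁ + (σ - σ̃)/2 • e₂`. Then
`⟨X_i, X_j⟩ = (σ_i σ_j + σ̃_i σ̃_j)/2` and `⟨h, S_N⟩ = -((h.1 - h.2) ∑ σ_i + (h.1 + h.2) ∑ σ̃_i)/2`, so the
polymer Hamiltonian is half the sum of two Ising Hamiltonians, one in `σ` and one in `σ̃`. The
Boltzmann weight therefore factors, and summing over pairs of spin configurations gives the
product of the two Ising partition functions at inverse temperature `β/2`. -/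

lemma stepOf_fst_eq (p : Bool × Bool) :
    ((stepOf p).1 : ℝ) = -(spin p.1 + spin p.2) / 2 := by
  rcases p with ⟨_ | _, _ | _⟩ <;> norm_num [stepOf, spin]

lemma stepOf_snd_eq (p : Bool × Bool) :
    ((stepOf p).2 : ℝ) = (spin p.1 - spin p.2) / 2 := by
  rcases p with ⟨_ | _, _ | _⟩ <;> norm_num [stepOf, spin]

lemma stepOf_inner_eq (p q : Bool × Bool) :
    (((stepOf p).1 * (stepOf q).1 + (stepOf p).2 * (stepOf q).2 : ℤ) : ℝ) =
      (spin p.1 * spin q.1 + spin p.2 * spin q.2) / 2 := by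
  push_cast
  rw [stepOf_fst_eq, stepOf_fst_eq, stepOf_snd_eq, stepOf_snd_eq]
  ring

lemma polyH_stepOf (N : ℕ) (V : Fin N → Fin N → ℝ) (h : ℝ × ℝ) (c : Fin N → Bool × Bool) :
    polyH N V h (fun i => stepOf (c i)) =
      (isingH N V (h.1 - h.2) (fun i => (c i).1) +
        isingH N V (h.1 + h.2) (fun i => (c i).2)) / 2 := by
  simp only [polyH, isingH, stepOf_inner_eq, Int.cast_sum, stepOf_fst_eq, stepOf_snd_eq,
    ← Finset.sum_div, mul_add, mul_div_assoc', Finset.sum_add_distrib, Finset.sum_sub_distrib,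
    Finset.sum_neg_distrib, mul_assoc]
  ring

lemma sum_pi_prod_mul_eq_mul_sum {ι α β R : Type*} [Fintype ι] [DecidableEq ι] [Fintype α]
    [Fintype β] [CommSemiring R] (f : (ι → α) → R) (g : (ι → β) → R) :
    ∑ c : ι → α × β, f (fun i => (c i).1) * g (fun i => (c i).2) =
      (∑ σ, f σ) * ∑ τ, g τ := by
  rw [Finset.sum_mul_sum, ← Fintype.sum_prod_type',
    ← (Equiv.arrowProdEquivProdArrow ι (fun _ => α) (fun _ => β)).sum_comp]
  rfl

theorem partition_function_factorization_general (N : ℕ) (V : Fin N → Fin N → ℝ)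
    (β : ℝ) (h : ℝ × ℝ) :
    polyZ N V β h =
      isingZ N V (β / 2) (h.1 - h.2) * isingZ N V (β / 2) (h.1 + h.2) := by
  have weight_eq (c : Fin N → Bool × Bool) :
      exp (-β * polyH N V h (fun i => stepOf (c i))) =
        exp (-(β / 2) * isingH N V (h.1 - h.2) (fun i => (c i).1)) *
          exp (-(β / 2) * isingH N V (h.1 + h.2) (fun i => (c i).2)) := by
    rw [polyH_stepOf, ← exp_add]
    congr 1
    ring
  simp only [polyZ, isingZ, weight_eq]
  exact sum_pi_prod_mul_eq_mul_sum (fun σ => exp (-(β / 2) * isingH N V (h.1 - h.2) σ))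
    (fun τ => exp (-(β / 2) * isingH N V (h.1 + h.2) τ))

/-- Partition function factorization. Under the spin
decomposition of the 2D polymer into two independent 1D Ising systems,
`ℤ_N^β(h) = Z_{Λ_N}^{β/2}(h₁) · Z_{Λ_N}^{β/2}(h₂)` with `h₁ = ⟨h, e₁-e₂⟩` and
`h₂ = ⟨h, e₁+e₂⟩`. -/
theorem partition_function_factorization (N : ℕ) (V : Fin N → Fin N → ℝ)
    (β : ℝ) (hβ : 0 < β) (h : ℝ × ℝ) :
    polyZ N V β h =
      isingZ N V (β / 2) (h.1 - h.2) * isingZ N V (β / 2) (h.1 + h.2) :=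
  partition_function_factorization_general N V β h

end
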